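/- Let R be a non-noetherian archimedean valuation ring that is an IF-ring, and let U be a nonzero uniserial R-module such that for each nonzero x in U the annihilator (0 : x) is not finitely generated. Then U is fp-injective if and only if U is faithful. -/

import Mathlib

open IsLocalRing

universe u

/-- A chain (valuation) ring: ideals are totally ordered by inclusion. -/
def IsChainRing (R : Type u) [CommRing R] : Prop := ∀ I J : Ideal R, I ≤ J ∨ J ≤ I

/-- Archimedean: the maximal ideal is the only nonzero prime ideal. -/
def IsArchimedeanLocal (R : Type u) [CommRing R] [IsLocalRing R] : Prop :=
  ∀ Q : Ideal R, Q.IsPrime → Q ≠ ⊥ → Q = maximalIdeal R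

/-- The annihilator ideal `(0 : x)` of a module element. -/
def annOf (R : Type u) {M : Type u} [CommRing R] [AddCommGroup M] [Module R M] (x : M) :
    Ideal R := LinearMap.ker (LinearMap.toSpanSingleton R M x)

/-- fp-injective (absolutely pure): every homomorphism from a finitely generated
submodule of a finite free module extends; equivalently `Ext¹(F, M) = 0` for every
finitely presented `F`. -/
def IsFpInjective (R M : Type u) [CommRing R] [AddCommGroup M] [Module R M] : Prop :=
  ∀ (n : ℕ) (K : Submodule R (Fin n → R)), K.FG →
    ∀ g : K →ₗ[R] M, ∃ h : (Fin n → R) →ₗ[R] M, ∀ x : K, h x = g x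

/-- A coherent ring: every finitely generated ideal is finitely presented. -/
def IsCoherentRing (R : Type u) [CommRing R] : Prop :=
  ∀ I : Ideal R, I.FG → Module.FinitePresentation R ↥I

/-- An IF-ring: coherent and self fp-injective. -/
def IsIFRing (R : Type u) [CommRing R] : Prop := IsCoherentRing R ∧ IsFpInjective R R

/-- Purity of a submodule: `I·M ⊓ X = I·X` for every finitely generated ideal `I`. -/
def IsPureSubmodule {R M : Type u} [CommRing R] [AddCommGroup M] [Module R M]
    (X : Submodule R M) : Prop :=
  ∀ I : Ideal R, I.FG → (I • (⊤ : Submodule R M)) ⊓ X = I • X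

/-- A submodule is uniserial if its submodules are totally ordered by inclusion. -/
def IsUniserialSub {R M : Type u} [CommRing R] [AddCommGroup M] [Module R M]
    (U : Submodule R M) : Prop :=
  ∀ V W : Submodule R M, V ≤ U → W ≤ U → V ≤ W ∨ W ≤ V

/-- A uniserial module: submodules are totally ordered by inclusion. -/
def IsUniserialMod (R M : Type u) [CommRing R] [AddCommGroup M] [Module R M] : Prop :=
  ∀ V W : Submodule R M, V ≤ W ∨ W ≤ V

/-- A faithful submodule: only `0` annihilates all its elements. -/
def IsFaithfulSub {R M : Type u} [CommRing R] [AddCommGroup M] [Module R M]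
    (U : Submodule R M) : Prop := ∀ r : R, (∀ x ∈ U, r • x = 0) → r = 0

/-- A faithful module: its annihilator is zero. -/
def IsFaithfulMod (R M : Type u) [CommRing R] [AddCommGroup M] [Module R M] : Prop :=
  ∀ r : R, (∀ x : M, r • x = 0) → r = 0

/-- `μ(M)`: the minimal number of generators of a module. -/
noncomputable def mu (R M : Type u) [CommRing R] [AddCommGroup M] [Module R M] : ℕ :=
  sInf {n : ℕ | ∃ s : Finset M, s.card = n ∧ Submodule.span R (s : Set M) = ⊤}

/-- A maximal ring: every family of cosets of ideals with the finite intersection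
property has nonempty total intersection. -/
def IsMaximalRing (R : Type u) [CommRing R] : Prop :=
  ∀ (ι : Type u) (a : ι → R) (A : ι → Ideal R),
    (∀ s : Finset ι, ∃ x : R, ∀ i ∈ s, x - a i ∈ A i) → ∃ x : R, ∀ i, x - a i ∈ A i

/-- Almost maximal: `R/A` is maximal for every nonzero ideal `A`. -/
def IsAlmostMaximalRing (R : Type u) [CommRing R] : Prop :=
  ∀ A : Ideal R, A ≠ ⊥ → IsMaximalRing (R ⧸ A)

/-- A uniform module: any two nonzero submodules intersect nontrivially. -/
def IsUniformMod (R M : Type u) [CommRing R] [AddCommGroup M] [Module R M] : Prop :=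
  ∀ N₁ N₂ : Submodule R M, N₁ ≠ ⊥ → N₂ ≠ ⊥ → N₁ ⊓ N₂ ≠ ⊥

/-- Bounded module type with bound `n`: every finitely generated module is a direct
sum of submodules each generated by at most `n` elements. -/
def HasBoundedModuleType (R : Type u) [CommRing R] (n : ℕ) : Prop :=
  ∀ (M : Type u) [AddCommGroup M] [Module R M], Module.Finite R M →
    ∃ (ι : Type u) (N : ι → Submodule R M),
      iSupIndep N ∧ (⨆ i, N i) = ⊤ ∧
      ∀ i, ∃ s : Finset M, s.card ≤ n ∧ Submodule.span R (s : Set M) = N i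

/-!
Over a coherent chain ring a module `M` is fp-injective as soon as it is divisible in the
weak sense `(0 : s) ⊆ (0 : x) → x ∈ sM`: extending a map from a finitely generated
`K ≤ Rⁿ⁺¹` reduces, via the principal ideal `π(K) = Ra` of first coordinates, to
`K ∩ ker π ≤ Rⁿ` (finitely generated by coherence) plus one correction term `x ∈ aM`. For a faithful uniserial `U`
whose element annihilators are never finitely generated, `(0 : s) ⊊ (0 : x)` gives `c` with
`cx = 0 ≠ csy` for some `y`, and uniseriality forces `x ∈ R(sy)`.

Conversely, if `r ≠ 0` kills an fp-injective `U`, write `(0 : r) = Rb`; self-fp-injectivity of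
`R` gives `(0 : b) = Rr ⊆ (0 : x)`, so `U = bU = bᵐU`. Since `R` is archimedean, `b` lies in
the radical of `Rr`, so some `bᵐ ∈ Rr` and `U = 0`.
-/

section

variable {R : Type u} [CommRing R]

theorem mem_annOf {M : Type u} [AddCommGroup M] [Module R M] {x : M} {t : R} :
    t ∈ annOf R x ↔ t • x = 0 :=
  LinearMap.mem_ker

theorem IsChainRing.isBezout (hchain : IsChainRing R) : IsBezout R :=
  IsBezout.iff_span_pair_isPrincipal.2 fun x y => by
    rw [Ideal.span_insert]
    rcases hchain (Ideal.span {x}) (Ideal.span {y}) with hxy | hyx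
    · rw [sup_eq_right.2 hxy]; exact ⟨y, rfl⟩
    · rw [sup_eq_left.2 hyx]; exact ⟨x, rfl⟩

theorem IsCoherentRing.fg_inf_ker {E : Type*} [AddCommGroup E] [Module R E]
    (hcoh : IsCoherentRing R) {K : Submodule R E} (hK : K.FG) (π : E →ₗ[R] R) :
    (K ⊓ LinearMap.ker π).FG := by
  have : Module.Finite R K := Module.Finite.iff_fg.2 hK
  have : Module.FinitePresentation R (LinearMap.range (π.domRestrict K)) :=
    hcoh _ (by rw [LinearMap.range_domRestrict]; exact hK.map π)
  have hker := Module.FinitePresentation.fg_ker _ (π.domRestrict K).surjective_rangeRestrict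
  rw [LinearMap.ker_rangeRestrict, LinearMap.ker_domRestrict] at hker
  rw [← Submodule.map_comap_subtype]
  exact hker.map K.subtype

theorem IsCoherentRing.annOf_fg (hcoh : IsCoherentRing R) (s : R) : (annOf R s).FG := by
  have h := hcoh.fg_inf_ker Module.Finite.fg_top (LinearMap.toSpanSingleton R R s)
  rwa [top_inf_eq] at h

theorem IsFpInjective.exists_eq_smul {M : Type u} [AddCommGroup M] [Module R M]
    (hM : IsFpInjective R M) {s : R} {x : M} (hle : annOf R s ≤ annOf R x) :
    ∃ u, x = s • u := by
  let φ := LinearMap.toSpanSingleton R (Fin 1 → R) fun _ => s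
  have hker : LinearMap.ker φ ≤ annOf R x := fun t ht => hle (mem_annOf.2 (congrFun ht 0))
  let g : LinearMap.range φ →ₗ[R] M :=
    (LinearMap.ker φ).liftQ (LinearMap.toSpanSingleton R M x) hker ∘ₗ
      φ.quotKerEquivRange.symm.toLinearMap
  obtain ⟨h, hh⟩ := hM 1 _ (LinearMap.range_eq_map φ ▸ Module.Finite.fg_top.map φ) g
  have hφ : φ.quotKerEquivRange (Submodule.Quotient.mk 1) = ⟨φ 1, LinearMap.mem_range_self φ 1⟩ :=
    Subtype.ext (φ.quotKerEquivRange_apply_mk 1)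
  have hx : g ⟨φ 1, LinearMap.mem_range_self φ 1⟩ = x := by
    simp only [g, LinearMap.comp_apply, LinearEquiv.coe_coe, ← hφ, LinearEquiv.symm_apply_apply]
    exact one_smul R x
  refine ⟨h 1, ?_⟩
  rw [← map_smul, ← hx, ← hh]
  congr 1
  ext
  simp [φ]

end

-- `IsFpInjective R M` is this property for every `E = Fin n → R`.
def ExtendsFromFG (R E M : Type*) [CommRing R] [AddCommGroup E] [Module R E] [AddCommGroup M]
    [Module R M] : Prop :=
  ∀ K : Submodule R E, K.FG → ∀ g : K →ₗ[R] M, ∃ h : E →ₗ[R] M, ∀ x : K, h x = g x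

section

variable {R : Type u} [CommRing R] {E F : Type*} {M : Type u} [AddCommGroup E] [Module R E]
  [AddCommGroup F] [Module R F] [AddCommGroup M] [Module R M]

theorem ExtendsFromFG.exists_comp_eq (hF : ExtendsFromFG R F M) (ρ : E →ₗ[R] F)
    {K : Submodule R E} (hK : K.FG) (hρ : Disjoint K (LinearMap.ker ρ)) (g : K →ₗ[R] M) :
    ∃ h : F →ₗ[R] M, ∀ x : K, h (ρ x) = g x := by
  let e := LinearEquiv.ofInjective _ (LinearMap.injective_domRestrict_iff.2 hρ)
  obtain ⟨h, hh⟩ := hF _ (by rw [LinearMap.range_domRestrict]; exact hK.map ρ)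
    (g ∘ₗ e.symm.toLinearMap)
  refine ⟨h, fun x => ?_⟩
  have hx := hh (e x)
  simp only [LinearMap.comp_apply, LinearEquiv.coe_coe, LinearEquiv.symm_apply_apply] at hx
  exact hx

theorem ExtendsFromFG.of_disjoint_ker (hchain : IsChainRing R) (hcoh : IsCoherentRing R)
    (hdiv : ∀ (s : R) (x : M), annOf R s ≤ annOf R x → ∃ u, x = s • u)
    (π : E →ₗ[R] R) (ρ : E →ₗ[R] F) (hπρ : Disjoint (LinearMap.ker π) (LinearMap.ker ρ))
    (hF : ExtendsFromFG R F M) : ExtendsFromFG R E M := by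
  intro K hK g
  obtain ⟨a, ha⟩ := (hchain.isBezout.isPrincipal_of_FG _ (hK.map π)).principal
  obtain ⟨k₀, hk₀K, hk₀⟩ : a ∈ K.map π := ha ▸ Submodule.mem_span_singleton_self a
  obtain ⟨h₀, hh₀⟩ := hF.exists_comp_eq ρ (hcoh.fg_inf_ker hK π)
    (hπρ.mono_left inf_le_right) (g ∘ₗ Submodule.inclusion inf_le_left)
  have hagree : ∀ v (hv : v ∈ K), π v = 0 → h₀ (ρ v) = g ⟨v, hv⟩ :=
    fun v hv hπv => hh₀ ⟨v, hv, hπv⟩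
  obtain ⟨u, hu⟩ := hdiv a (g ⟨k₀, hk₀K⟩ - h₀ (ρ k₀)) fun t ht => by
    have htk₀ : π (t • k₀) = 0 := by rw [map_smul, hk₀]; exact mem_annOf.1 ht
    rw [mem_annOf, smul_sub, ← map_smul, ← map_smul, ← map_smul,
      hagree _ (K.smul_mem t hk₀K) htk₀]
    exact sub_self _
  refine ⟨h₀ ∘ₗ ρ + LinearMap.toSpanSingleton R M u ∘ₗ π, fun ⟨v, hv⟩ => ?_⟩
  obtain ⟨c, hc⟩ := Submodule.mem_span_singleton.1 (ha ▸ Submodule.mem_map_of_mem hv)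
  have hπ : π (v - c • k₀) = 0 := by rw [map_sub, map_smul, hk₀, hc, sub_self]
  have hgk₀ : g ⟨k₀, hk₀K⟩ = h₀ (ρ k₀) + a • u := eq_add_of_sub_eq' hu
  calc h₀ (ρ v) + π v • u = h₀ (ρ (v - c • k₀)) + c • (h₀ (ρ k₀) + a • u) := by
        rw [map_sub, map_sub, map_smul, map_smul, smul_add, smul_smul, ← smul_eq_mul, hc]
        abel
    _ = g (⟨v - c • k₀, K.sub_mem hv (K.smul_mem c hk₀K)⟩ + c • ⟨k₀, hk₀K⟩) := by
        rw [hagree _ _ hπ, ← hgk₀, map_add, map_smul]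
    _ = g ⟨v, hv⟩ := by congr 1; ext; simp

end

section

variable {R : Type u} [CommRing R]

theorem isFpInjective_of_forall_exists_eq_smul (hchain : IsChainRing R) (hcoh : IsCoherentRing R)
    {M : Type u} [AddCommGroup M] [Module R M]
    (hdiv : ∀ (s : R) (x : M), annOf R s ≤ annOf R x → ∃ u, x = s • u) :
    IsFpInjective R M := by
  intro n
  induction n with
  | zero => exact fun _ _ g => ⟨0, fun x => by simp [Subsingleton.elim x 0]⟩
  | succ n ih =>
    refine ExtendsFromFG.of_disjoint_ker hchain hcoh hdiv (LinearMap.proj 0)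
      (LinearMap.funLeft R R Fin.succ) (Submodule.disjoint_def.2 fun v h₀ hsucc => ?_) ih
    funext i
    exact Fin.cases h₀ (fun j => congrFun hsucc j) i

theorem exists_eq_smul_of_isFaithfulMod {U : Type u} [AddCommGroup U] [Module R U]
    (huni : IsUniserialMod R U) (hfaith : IsFaithfulMod R U)
    (hann : ∀ x : U, x ≠ 0 → ¬ (annOf R x).FG) {s : R} (hs : (annOf R s).FG) {x : U}
    (hle : annOf R s ≤ annOf R x) : ∃ u, x = s • u := by
  by_cases hx : x = 0
  · exact ⟨0, by rw [hx, smul_zero]⟩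
  obtain ⟨c, hcx, hcs⟩ := SetLike.exists_of_lt (hle.lt_of_ne fun h => hann x hx (h ▸ hs))
  obtain ⟨y, hy⟩ : ∃ y : U, (c * s) • y ≠ 0 := by
    by_contra! h
    exact hcs (mem_annOf.2 (hfaith _ h))
  rcases huni (R ∙ x) (R ∙ (s • y)) with hxy | hyx
  · obtain ⟨t, ht⟩ := Submodule.mem_span_singleton.1 (hxy (Submodule.mem_span_singleton_self x))
    exact ⟨t • y, by rw [← ht, smul_comm]⟩
  · obtain ⟨t, ht⟩ := Submodule.mem_span_singleton.1 (hyx (Submodule.mem_span_singleton_self _))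
    refine absurd ?_ hy
    rw [mul_smul, ← ht, smul_comm, mem_annOf.1 hcx, smul_zero]

theorem annOf_le_span_of_annOf_eq_span (hR : IsFpInjective R R) {r b : R}
    (hb : annOf R r = Ideal.span {b}) : annOf R b ≤ Ideal.span {r} := fun t ht => by
  have hrt : annOf R r ≤ annOf R t := by
    rw [hb, Ideal.span_le, Set.singleton_subset_iff, SetLike.mem_coe, mem_annOf, smul_eq_mul,
      mul_comm, ← smul_eq_mul, ← mem_annOf]
    exact ht
  obtain ⟨u, rfl⟩ := hR.exists_eq_smul hrt
  exact Ideal.mem_span_singleton'.2 ⟨u, mul_comm u r⟩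

theorem IsArchimedeanLocal.exists_pow_mem_span [IsLocalRing R] (harch : IsArchimedeanLocal R)
    {r b : R} (hr : r ≠ 0) (hb : b ∈ maximalIdeal R) : ∃ m, b ^ m ∈ Ideal.span {r} := by
  refine Ideal.mem_radical_iff.1 ?_
  rw [Ideal.radical_eq_sInf, Submodule.mem_sInf]
  rintro Q ⟨hrQ, hQ⟩
  have hQ0 : Q ≠ ⊥ := fun h => hr (by simpa [h] using hrQ (Ideal.mem_span_singleton_self r))
  exact harch Q hQ hQ0 ▸ hb

theorem isFaithfulMod_of_isFpInjective [IsLocalRing R] (hchain : IsChainRing R)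
    (harch : IsArchimedeanLocal R) (hcoh : IsCoherentRing R) (hR : IsFpInjective R R)
    {U : Type u} [AddCommGroup U] [Module R U] [Nontrivial U] (hU : IsFpInjective R U) :
    IsFaithfulMod R U := by
  intro r hr
  by_contra hr0
  obtain ⟨b, hb⟩ := (hchain.isBezout.isPrincipal_of_FG _ (hcoh.annOf_fg r)).principal
  have hbm : b ∈ maximalIdeal R := fun hbu => hr0 <| by
    have htop : annOf R r = ⊤ :=
      Ideal.eq_top_of_isUnit_mem _ (hb ▸ Submodule.mem_span_singleton_self b) hbu
    simpa using mem_annOf.1 (htop ▸ Submodule.mem_top : (1 : R) ∈ annOf R r)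
  have hdiv : ∀ x : U, ∃ z, x = b • z := fun x => hU.exists_eq_smul <|
    (annOf_le_span_of_annOf_eq_span hR hb).trans <| by
      rw [Ideal.span_le, Set.singleton_subset_iff, SetLike.mem_coe, mem_annOf]
      exact hr x
  have hpow : ∀ (m : ℕ) (x : U), ∃ z, x = b ^ m • z := by
    intro m
    induction m with
    | zero => exact fun x => ⟨x, by rw [pow_zero, one_smul]⟩
    | succ m ih =>
      intro x
      obtain ⟨z, rfl⟩ := ih x
      obtain ⟨z', rfl⟩ := hdiv z
      exact ⟨z', by rw [pow_succ, mul_smul]⟩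
  obtain ⟨m, hm⟩ := harch.exists_pow_mem_span hr0 hbm
  obtain ⟨w, hw⟩ := Ideal.mem_span_singleton'.1 hm
  obtain ⟨x, hx⟩ := exists_ne (0 : U)
  obtain ⟨z, rfl⟩ := hpow m x
  exact hx (by rw [← hw, mul_smul, hr, smul_zero])

end

theorem stmt4_general (R : Type u) [CommRing R] [IsLocalRing R]
    (hchain : IsChainRing R) (harch : IsArchimedeanLocal R)
    (hIF : IsIFRing R)
    (U : Type u) [AddCommGroup U] [Module R U] [Nontrivial U]
    (huni : IsUniserialMod R U)
    (hann : ∀ x : U, x ≠ 0 → ¬ (annOf R x).FG) :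
    IsFpInjective R U ↔ IsFaithfulMod R U :=
  ⟨isFaithfulMod_of_isFpInjective hchain harch hIF.1 hIF.2, fun hfaith =>
    isFpInjective_of_forall_exists_eq_smul hchain hIF.1 fun _ _ hle =>
      exists_eq_smul_of_isFaithfulMod huni hfaith hann (hIF.1.annOf_fg _) hle⟩

theorem stmt4 (R : Type u) [CommRing R] [IsLocalRing R]
    (hchain : IsChainRing R) (harch : IsArchimedeanLocal R)
    (hnoeth : ¬ IsNoetherianRing R) (hIF : IsIFRing R)
    (U : Type u) [AddCommGroup U] [Module R U] [Nontrivial U]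
    (huni : IsUniserialMod R U)
    (hann : ∀ x : U, x ≠ 0 → ¬ (annOf R x).FG) :
    IsFpInjective R U ↔ IsFaithfulMod R U :=
  stmt4_general R hchain harch hIF U huni hann
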